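/- Let N be a stable phylogenetic network on X that is tree-child. Then every phylogenetic tree on X that is strongly displayed by N is a base tree for N. -/

import Mathlib

/- ------------------------------------------------------------------
Common combinatorial framework for phylogenetic networks, MUL-trees,
un-fold and fold-up operations, following Huber--Moulton--Scornavacca--
Steel and the paper "Three applications of un-fold/fold-up operations
for stable phylogenetic networks".

A `Net` is a rooted directed multigraph: `arcs u v` records the number
of parallel arcs from `u` to `v`.  Directed walks are recorded as lists
of *arc tokens* `(u, v, i)` (the `i`-th parallel arc from `u` to `v`),
so that parallel arcs give rise to different directed paths.
------------------------------------------------------------------- -/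

open Classical

universe u v w

namespace Phylo

/-- A rooted directed multigraph on the vertex type `V`:  `arcs u v` is the
number of parallel arcs from `u` to `v`, `verts` is the vertex set and
`root` the root. -/
structure Net (V : Type u) where
  verts : Set V
  arcs : V → V → ℕ
  root : V

/-- An arc token: `(u, v, i)` stands for the `i`-th parallel arc from `u` to `v`. -/
abbrev Arc (V : Type u) := V × V × ℕ

namespace Net

variable {V : Type u}

/-- The arc token `a` is a genuine arc of `N`. -/
def okArc (N : Net V) (a : Arc V) : Prop :=
  a.1 ∈ N.verts ∧ a.2.1 ∈ N.verts ∧ a.2.2 < N.arcs a.1 a.2.1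

/-- `l` is a directed walk (possibly trivial) starting at the vertex `u`,
recorded as the list of its arc tokens. -/
def WalkFrom (N : Net V) (u : V) (l : List (Arc V)) : Prop :=
  u ∈ N.verts ∧ (∀ a ∈ l, N.okArc a) ∧
    List.Chain' (fun a b : Arc V => a.2.1 = b.1) l ∧
    ∀ a ∈ l.head?, (a : Arc V).1 = u

/-- The end vertex of the walk `l` starting at `u`. -/
def endOf (u : V) (l : List (Arc V)) : V := (l.getLastD (u, u, 0)).2.1

/-- The list of vertices visited by a walk `l` starting at `u`. -/
def walkVerts (u : V) (l : List (Arc V)) : List V := u :: l.map (fun a => a.2.1)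

/-- The inner (non-endpoint) vertices of a walk `l` starting at `u`. -/
def innerVerts (u : V) (l : List (Arc V)) : List V := ((walkVerts u l).dropLast).drop 1

/-- `w` is *below* `u` (there is a directed path from `u` to `w`; every
vertex is below itself).  Equivalently, `u` is an *ancestor* of `w`. -/
def Reaches (N : Net V) (u w : V) : Prop := ∃ l, N.WalkFrom u l ∧ endOf u l = w

/-- The indegree of a vertex (counting parallel arcs). -/
noncomputable def inDeg (N : Net V) (v : V) : ℕ := ∑ᶠ u, N.arcs u v

/-- The outdegree of a vertex (counting parallel arcs). -/
noncomputable def outDeg (N : Net V) (v : V) : ℕ := ∑ᶠ u, N.arcs v u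

/-- A leaf is a vertex of outdegree zero. -/
def IsLeaf (N : Net V) (v : V) : Prop := v ∈ N.verts ∧ N.outDeg v = 0

/-- An interior vertex is a non-leaf vertex. -/
def IsInterior (N : Net V) (v : V) : Prop := v ∈ N.verts ∧ N.outDeg v ≠ 0

/-- A tree vertex is a vertex of indegree at most one. -/
def IsTreeVert (N : Net V) (v : V) : Prop := v ∈ N.verts ∧ N.inDeg v ≤ 1

/-- A hybrid vertex is a vertex of indegree at least two. -/
def IsHybrid (N : Net V) (v : V) : Prop := v ∈ N.verts ∧ 2 ≤ N.inDeg v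

/-- The one-step arc relation. -/
def ArcRel (N : Net V) (u v : V) : Prop := 0 < N.arcs u v

/-- `N` contains no directed cycle. -/
def Acyclic (N : Net V) : Prop := ∀ v, ¬ Relation.TransGen N.ArcRel v v

/-- A rooted connected pseudoDAG: a finite rooted directed (multi)graph with
no directed cycles in which every vertex is reachable from the root. -/
structure IsPseudoDAG (N : Net V) : Prop where
  finite : N.verts.Finite
  rootMem : N.root ∈ N.verts
  arcMem : ∀ u v, N.arcs u v ≠ 0 → u ∈ N.verts ∧ v ∈ N.verts
  acyclic : N.Acyclic
  connected : ∀ v ∈ N.verts, N.Reaches N.root v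

/-- An `X`-network: a rooted connected pseudoDAG whose leaf set is `X`, where
the root has indegree zero, every non-leaf tree vertex has outdegree two,
every hybrid vertex has outdegree one, and every leaf has total degree one. -/
structure IsXNetwork (N : Net V) (X : Set V) extends IsPseudoDAG N : Prop where
  rootInDeg : N.inDeg N.root = 0
  leafSet : ∀ v, N.IsLeaf v ↔ v ∈ X
  treeOutDeg : ∀ v ∈ N.verts, N.inDeg v ≤ 1 → N.outDeg v ≠ 0 → N.outDeg v = 2
  hybridOutDeg : ∀ v ∈ N.verts, 2 ≤ N.inDeg v → N.outDeg v = 1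
  leafInDeg : ∀ v ∈ X, N.inDeg v = 1

/-- No parallel arcs. -/
def NoParallel (N : Net V) : Prop := ∀ u v, N.arcs u v ≤ 1

/-- A phylogenetic network on `X`: an `X`-network without parallel arcs. -/
structure IsPhyloNetwork (N : Net V) (X : Set V) extends IsXNetwork N X : Prop where
  noParallel : N.NoParallel

/-- A phylogenetic tree on `X`: a phylogenetic network with no hybrid vertices. -/
structure IsPhyloTree (N : Net V) (X : Set V) extends IsPhyloNetwork N X : Prop where
  noHybrid : ∀ v, ¬ N.IsHybrid v

/-- A vertex with indegree one and outdegree one (to be suppressed). -/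
def Suppressible (N : Net V) (v : V) : Prop :=
  v ∈ N.verts ∧ N.inDeg v = 1 ∧ N.outDeg v = 1

/-- The graph obtained from `N` by suppressing all vertices of indegree one and
outdegree one: kept vertices are the non-suppressible ones, and the number of
arcs from `u` to `w` is the number of directed paths from `u` to `w` in `N`
all of whose inner vertices are suppressible. -/
noncomputable def suppr (N : Net V) : Net V where
  verts := {v ∈ N.verts | ¬ N.Suppressible v}
  arcs := fun u w =>
    if u ∈ N.verts ∧ ¬ N.Suppressible u ∧ w ∈ N.verts ∧ ¬ N.Suppressible w then
      Set.ncard {l : List (Arc V) | N.WalkFrom u l ∧ l ≠ [] ∧ endOf u l = w ∧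
        ∀ x ∈ innerVerts u l, N.Suppressible x}
    else 0
  root := N.root

/-- `g` realizes an isomorphism of rooted multigraphs from `N` to `N'`. -/
def NetIsoVia {W : Type w} (N : Net V) (N' : Net W) (g : V → W) : Prop :=
  Set.BijOn g N.verts N'.verts ∧
    (∀ u ∈ N.verts, ∀ v ∈ N.verts, N'.arcs (g u) (g v) = N.arcs u v) ∧
    g N.root = N'.root

/-- `w` is a vertex-stable ancestor of the leaf `x`: `w` is an interior vertex
lying on every directed path from the root to `x`. -/
def IsVSAncestor (N : Net V) (w x : V) : Prop :=
  N.IsInterior w ∧ N.IsLeaf x ∧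
    ∀ l, N.WalkFrom N.root l → endOf N.root l = x → w ∈ walkVerts N.root l

/-- `N` is tree-child: every interior vertex has a child that is a tree vertex. -/
def TreeChild (N : Net V) : Prop :=
  ∀ v, N.IsInterior v → ∃ u, 0 < N.arcs v u ∧ N.IsTreeVert u

/-- `N` is compressed: no arc has both its tail and its head hybrid. -/
def Compressed (N : Net V) : Prop :=
  ∀ u v, 0 < N.arcs u v → ¬(N.IsHybrid u ∧ N.IsHybrid v)

/-- `N` is reticulation-visible: every hybrid vertex is a vertex-stable
ancestor of some leaf. -/
def RetVisible (N : Net V) (X : Set V) : Prop :=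
  ∀ h, N.IsHybrid h → ∃ x ∈ X, N.IsVSAncestor h x

/-- The set of arc tokens used by a walk. -/
def arcsOf (l : List (Arc V)) : Set (Arc V) := {a | a ∈ l}

/-- The union of the directed paths `p₁` and `p₂` contains a subgraph that is
a reticulation cycle of `N`, i.e. the union of two arc-disjoint non-trivial
directed paths of `N` with the same start vertex and the same end vertex. -/
def ContainsRetCycle (N : Net V) (p₁ p₂ : List (Arc V)) : Prop :=
  ∃ (q₁ q₂ : List (Arc V)) (s e : V),
    N.WalkFrom s q₁ ∧ N.WalkFrom s q₂ ∧ q₁ ≠ [] ∧ q₂ ≠ [] ∧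
    endOf s q₁ = e ∧ endOf s q₂ = e ∧
    Disjoint (arcsOf q₁) (arcsOf q₂) ∧
    arcsOf q₁ ∪ arcsOf q₂ ⊆ arcsOf p₁ ∪ arcsOf p₂

/-- The set of vertices having a descendant in `Y`. -/
def keepSet (N : Net V) (Y : Set V) : Set V := {v ∈ N.verts | ∃ y ∈ Y, N.Reaches v y}

/-- The result of the leaf-removing operations applied to all leaves outside
`Y`: restrict to the vertices having a descendant in `Y` and suppress all
resulting vertices of indegree one and outdegree one. -/
noncomputable def restrictNet (N : Net V) (Y : Set V) : Net V :=
  Net.suppr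
    { verts := N.keepSet Y
      arcs := fun u w => if u ∈ N.keepSet Y ∧ w ∈ N.keepSet Y then N.arcs u w else 0
      root := N.root }

end Net

/-- A labelled rooted directed multigraph: the data of a MUL-tree on the
label set: `lab x` is the set of leaves labelled `x`. -/
structure LNet (V : Type u) (L : Type v) extends Net V where
  lab : L → Set V

namespace LNet

variable {V : Type u} {L : Type v}

/-- `M` is a MUL-tree on `X`: a rooted tree whose root has indegree `0`, with
no vertex of indegree one and outdegree one, in which every leaf carries
exactly one label from `X` and every label of `X` occurs. -/
structure IsMulTree (M : LNet V L) (X : Set L) : Prop where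
  pseudo : M.toNet.IsPseudoDAG
  rootInDeg : M.toNet.inDeg M.root = 0
  inDegOne : ∀ v ∈ M.verts, v ≠ M.root → M.toNet.inDeg v = 1
  noSupp : ∀ v, ¬ M.toNet.Suppressible v
  labLeaf : ∀ x ∈ X, ∀ l ∈ M.lab x, M.toNet.IsLeaf l
  labNonempty : ∀ x ∈ X, (M.lab x).Nonempty
  labCover : ∀ l, M.toNet.IsLeaf l → ∃! x, x ∈ X ∧ l ∈ M.lab x
  labOff : ∀ x, x ∉ X → M.lab x = ∅

/-- The set of vertices below `v`. -/
def belowSet (M : LNet V L) (v : V) : Set V := {w | M.toNet.Reaches v w}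

/-- The subMUL-tree `M_v` of `M` rooted at the vertex `v` (delete the incoming
arc of `v` and restrict the labelling). -/
noncomputable def subAt (M : LNet V L) (v : V) : LNet V L where
  verts := M.belowSet v
  arcs := fun u w => if u ∈ M.belowSet v ∧ w ∈ M.belowSet v then M.arcs u w else 0
  root := v
  lab := fun x => M.lab x ∩ M.belowSet v

/-- `η` realizes an isomorphism of MUL-trees (same label type). -/
def MulIsoVia {V' : Type w} (M : LNet V L) (M' : LNet V' L) (η : V → V') : Prop :=
  Set.BijOn η M.verts M'.verts ∧
    (∀ u ∈ M.verts, ∀ w ∈ M.verts, M'.arcs (η u) (η w) = M.arcs u w) ∧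
    η M.root = M'.root ∧
    ∀ x : L, η '' (M.lab x ∩ M.verts) = M'.lab x ∩ M'.verts

/-- Two labelled trees (on the same label type) are isomorphic. -/
def MulIso {V' : Type w} (M : LNet V L) (M' : LNet V' L) : Prop := ∃ η, MulIsoVia M M' η

/-- `η` realizes an isomorphism of MUL-trees on `X` modulo the label
translation `e`. -/
def MulIsoRelVia {V' : Type w} {L' : Type*} (M : LNet V L) (X : Set L)
    (M' : LNet V' L') (e : L → L') (η : V → V') : Prop :=
  Set.BijOn η M.verts M'.verts ∧
    (∀ u ∈ M.verts, ∀ w ∈ M.verts, M'.arcs (η u) (η w) = M.arcs u w) ∧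
    η M.root = M'.root ∧
    ∀ x ∈ X, η '' (M.lab x ∩ M.verts) = M'.lab (e x) ∩ M'.verts

/-- The equivalence relation `∼`: `u ∼ w` iff `u = w` or the subMUL-trees
`M_u` and `M_w` are isomorphic. -/
def Sim (M : LNet V L) (u w : V) : Prop := u = w ∨ MulIso (M.subAt u) (M.subAt w)

/-- The `∼`-equivalence class of `w`; the map `eqClass M : V(M) → V(M)/∼`
plays the role of the projection `p_M` onto the quotient. -/
def eqClass (M : LNet V L) (w : V) : Set V := {u ∈ M.verts | M.Sim u w}

/-- The quotient `V(M)/∼`, realized as the set of `∼`-equivalence classes. -/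
def classSet (M : LNet V L) : Set (Set V) := M.eqClass '' M.verts

/-- `c` is a `∼`-equivalence class of `M`. -/
def IsClassOf (M : LNet V L) (c : Set V) : Prop := ∃ w ∈ M.verts, c = M.eqClass w

/-- The class `c` gets a hybrid vertex above it in the fold-up of `M`:
some (equivalently, any) member of `c` has its parent in a strictly smaller
`∼`-class. -/
def ClassHyb (M : LNet V L) (c : Set V) : Prop :=
  ∃ w ∈ M.verts, c = M.eqClass w ∧ ∃ u, 0 < M.arcs u w ∧ (M.eqClass u).ncard < c.ncard

/-- `d` is the class of a parent of a member of `c`. -/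
def IsParentClassOf (M : LNet V L) (d c : Set V) : Prop :=
  ∃ u w, 0 < M.arcs u w ∧ d = M.eqClass u ∧ c = M.eqClass w

/-- The number of children inside `c` of a member of `d`. -/
noncomputable def childMult (M : LNet V L) (d c : Set V) : ℕ :=
  sSup {n : ℕ | ∃ u ∈ d, n = ∑ᶠ w ∈ c, M.arcs u w}

/-- The fold-up `F(M)` of the MUL-tree `M`: the `X`-network obtained by
repeatedly identifying all maximal inextendible subMUL-trees, subdividing
the incoming arcs of their roots and identifying the subdivision vertices.
Concretely, its tree vertices are the `∼`-classes of `M`, there is a hybrid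
vertex above each class whose members have parents in a strictly smaller
class, and arcs are induced by the arcs of `M`. -/
noncomputable def foldUp (M : LNet V L) : Net (Set V ⊕ Set V) where
  verts := (Sum.inl '' {c | M.IsClassOf c}) ∪
    (Sum.inr '' {c | M.IsClassOf c ∧ M.ClassHyb c})
  arcs := fun a b =>
    match a, b with
    | Sum.inl d, Sum.inl c =>
        if M.IsClassOf d ∧ M.IsClassOf c ∧ ¬ M.ClassHyb c ∧ M.IsParentClassOf d c
        then 1 else 0
    | Sum.inl d, Sum.inr c =>
        if M.IsClassOf d ∧ M.IsClassOf c ∧ M.ClassHyb c ∧ M.IsParentClassOf d c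
        then M.childMult d c else 0
    | Sum.inr c, Sum.inl c' =>
        if c' = c ∧ M.IsClassOf c ∧ M.ClassHyb c then 1 else 0
    | Sum.inr _, Sum.inr _ => 0
  root := Sum.inl (M.eqClass M.root)

/-- The `∼`-class of the leaves labelled `x`. -/
def labClass (M : LNet V L) (x : L) : Set V := {w ∈ M.verts | ∃ l ∈ M.lab x, M.Sim w l}

/-- The leaf set of the fold-up of `M`, identified with `X`. -/
def foldX (M : LNet V L) (X : Set L) : Set (Set V ⊕ Set V) :=
  (fun x => Sum.inl (M.labClass x)) '' X

/-- A MUL-tree is sound if its fold-up is a phylogenetic network. -/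
def IsSound (M : LNet V L) (X : Set L) : Prop :=
  M.IsMulTree X ∧ Net.IsPhyloNetwork M.foldUp (M.foldX X)

/-- An `X`-set of `M`: a set of leaves containing exactly one leaf labelled
`x` for every `x ∈ X`. -/
def IsXSet (M : LNet V L) (X : Set L) (C : Set V) : Prop :=
  (∀ l ∈ C, M.toNet.IsLeaf l) ∧ ∀ x ∈ X, ∃! l, l ∈ C ∧ l ∈ M.lab x

/-- `r` is the last common ancestor of the elements of `C`. -/
def IsLca (M : LNet V L) (r : V) (C : Set V) : Prop :=
  r ∈ M.verts ∧ (∀ c ∈ C, M.toNet.Reaches r c) ∧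
    ∀ r' ∈ M.verts, (∀ c ∈ C, M.toNet.Reaches r' c) → M.toNet.Reaches r' r

/-- The last common ancestor `r_C` of the elements of `C`. -/
noncomputable def lcaOf [Nonempty V] (M : LNet V L) (C : Set V) : V :=
  Classical.epsilon fun r => M.IsLca r C

/-- The vertex set of `M_C⁺`: all vertices on a directed path from
`lca(C)` to a leaf in `C`. -/
def subPlusVerts [Nonempty V] (M : LNet V L) (C : Set V) : Set V :=
  {v | M.toNet.Reaches (M.lcaOf C) v ∧ ∃ c ∈ C, M.toNet.Reaches v c}

/-- The tree `M_C⁺` spanned by the leaves in `C`; the canonical injection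
`ξ_C⁺ : V(M_C⁺) → V(M)` is the set-inclusion `subPlusVerts M C ⊆ V`, so that
the map `ξ̄_C⁺ = p_M ∘ ξ_C⁺` is realized by `eqClass M` restricted to
`subPlusVerts M C`. -/
noncomputable def subPlus [Nonempty V] (M : LNet V L) (C : Set V) : Net V where
  verts := M.subPlusVerts C
  arcs := fun u w => if u ∈ M.subPlusVerts C ∧ w ∈ M.subPlusVerts C then M.arcs u w else 0
  root := M.lcaOf C

/-- The phylogenetic tree `M_C` induced by the `X`-set `C`: suppress all
vertices of indegree one and outdegree one in `M_C⁺`. -/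
noncomputable def mC [Nonempty V] (M : LNet V L) (C : Set V) : Net V := (M.subPlus C).suppr

/-- The set `V(M)^C`: the vertex `r_C` together with all vertices `v` such
that no vertex below `v` is `∼`-equivalent to `r_C`. -/
def vmc [Nonempty V] (M : LNet V L) (C : Set V) : Set V :=
  insert (M.lcaOf C) {v ∈ M.verts | ∀ u, M.toNet.Reaches v u → ¬ M.Sim u (M.lcaOf C)}

/-- Vertices of `M` having a descendant leaf labelled by an element of `Y`. -/
def keepSet (M : LNet V L) (Y : Set L) : Set V :=
  {v ∈ M.verts | ∃ w, M.toNet.Reaches v w ∧ ∃ y ∈ Y, w ∈ M.lab y}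

/-- The MUL-tree `M_Y` obtained from `M` by the leaf-removing operation:
remove all leaves labelled outside `Y` (together with everything having no
leaf labelled in `Y` below it) and suppress all resulting vertices of
indegree one and outdegree one. -/
noncomputable def restrictMul (M : LNet V L) (Y : Set L) : LNet V L where
  toNet := Net.suppr
    { verts := M.keepSet Y
      arcs := fun u w => if u ∈ M.keepSet Y ∧ w ∈ M.keepSet Y then M.arcs u w else 0
      root := M.root }
  lab := fun y => if y ∈ Y then M.lab y else ∅

end LNet

namespace Net

variable {V : Type u}

/-- The vertex set of the un-fold `U(N)` of `N`: the set `π⁻(N)` of directed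
paths of `N` starting at the root and ending in a tree vertex.  (The
bijection `Ψ_N : π⁻(N) → V(U(N))` is thereby realized as the identity.) -/
def unfoldVerts (N : Net V) : Set (List (Arc V)) :=
  {p | N.WalkFrom N.root p ∧ N.IsTreeVert (endOf N.root p)}

/-- The un-fold `U(N)` of `N`, a MUL-tree on `X`: vertices are the directed
paths from the root ending in tree vertices, arcs correspond to extending
such a path by a single arc followed by a (possibly empty) run of hybrid
vertices, and the leaves labelled `x ∈ X` are the paths ending in `x`. -/
noncomputable def unfoldNet (N : Net V) (X : Set V) : LNet (List (Arc V)) V where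
  verts := unfoldVerts N
  arcs := fun p q =>
    if p ∈ unfoldVerts N ∧ q ∈ unfoldVerts N ∧
        ∃ r, r ≠ [] ∧ q = p ++ r ∧ ∀ a ∈ r.dropLast, N.IsHybrid (a : Arc V).2.1
    then 1 else 0
  root := []
  lab := fun x => if x ∈ X then {p ∈ unfoldVerts N | endOf N.root p = x} else ∅

end Net

/-- `N` is a stable phylogenetic network on `X`: `N` is a phylogenetic
network isomorphic to the fold-up of its un-fold, via an isomorphism fixing
`X` pointwise (i.e. sending each leaf `x` to the leaf of `F(U(N))`
corresponding to `x`). -/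
def IsStable {V : Type u} (N : Net V) (X : Set V) : Prop :=
  Net.IsPhyloNetwork N X ∧
    ∃ g, Net.NetIsoVia N (Net.unfoldNet N X).foldUp g ∧
      ∀ x ∈ X, g x = Sum.inl ((Net.unfoldNet N X).labClass x)

/-- `T` is endorsed by the MUL-tree `M` via the `X`-set `C`, the isomorphism
`T ≅ M_C` being realized by `σ` (which sends each `x ∈ X` to the unique leaf
of `C` labelled `x`). -/
def EndorsedVia {V : Type u} {W : Type w} [Nonempty W] (T : Net V) (X : Set V)
    (M : LNet W V) (C : Set W) (σ : V → W) : Prop :=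
  M.IsXSet X C ∧ Net.NetIsoVia T (M.mC C) σ ∧ ∀ x ∈ X, σ x ∈ C ∧ σ x ∈ M.lab x

/-- `T` is endorsed by the MUL-tree `M` via the `X`-set `C`. -/
def Endorsed {V : Type u} {W : Type w} [Nonempty W] (T : Net V) (X : Set V)
    (M : LNet W V) (C : Set W) : Prop :=
  ∃ σ, EndorsedVia T X M C σ

/-- `N'` is a subgraph of `N` with leaf set `X` which is (an isomorphic copy,
via the identity on `X`, of) a subdivision of `T`: suppressing all vertices
of indegree one and outdegree one in `N'` yields a tree isomorphic to `T`
via an isomorphism `g` fixing `X` pointwise. -/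
def IsDisplayWitness {V : Type u} (N : Net V) (X : Set V) (T : Net V)
    (N' : Net V) (g : V → V) : Prop :=
  N'.verts ⊆ N.verts ∧ (∀ u v, N'.arcs u v ≤ N.arcs u v) ∧
    N'.root ∈ N'.verts ∧ (∀ v ∈ N'.verts, N'.Reaches N'.root v) ∧
    (∀ v, N'.IsLeaf v ↔ v ∈ X) ∧
    Net.NetIsoVia T N'.suppr g ∧ ∀ x ∈ X, g x = x

/-- The phylogenetic tree `T` is displayed by `N`. -/
def Displays {V : Type u} (N : Net V) (X : Set V) (T : Net V) : Prop :=
  ∃ N' g, IsDisplayWitness N X T N' g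

/-- The phylogenetic tree `T` is strongly displayed by `N`: it is displayed
via a subdivision whose root is the root of `N`. -/
def StronglyDisplays {V : Type u} (N : Net V) (X : Set V) (T : Net V) : Prop :=
  ∃ N' g, IsDisplayWitness N X T N' g ∧ N'.root = N.root

/-- `G` is a rooted tree. -/
structure IsRootedTree {V : Type u} (G : Net V) : Prop where
  pseudo : G.IsPseudoDAG
  rootInDeg : G.inDeg G.root = 0
  inDegOne : ∀ v ∈ G.verts, v ≠ G.root → G.inDeg v = 1

/-- `T'` is a subdivision of `T` (with the identity on `X`): `T'` is a rooted
tree which, after suppressing all vertices of indegree one and outdegree one,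
is isomorphic to `T` via an isomorphism fixing `X` pointwise. -/
def IsSubdivisionOf {V : Type u} (T' T : Net V) (X : Set V) : Prop :=
  IsRootedTree T' ∧ ∃ g, Net.NetIsoVia T T'.suppr g ∧ ∀ x ∈ X, g x = x

/-- `T` is a base tree for `N`: `N` can be obtained from `T` by subdividing
some arcs of `T`, adding arcs between the subdivision vertices without
creating parallel arcs or directed cycles, and suppressing all subdivision
vertices still of indegree one and outdegree one. -/
def IsBaseTreeFor {V : Type u} (T : Net V) (X : Set V) (N : Net V) : Prop :=
  ∃ T' G : Net V,
    IsSubdivisionOf T' T X ∧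
    G.verts = T'.verts ∧ G.root = T'.root ∧
    (∀ u v, T'.arcs u v ≤ G.arcs u v) ∧
    (∀ u v, T'.arcs u v ≠ G.arcs u v → T'.Suppressible u ∧ T'.Suppressible v) ∧
    G.NoParallel ∧ G.Acyclic ∧
    ∃ h, Net.NetIsoVia G.suppr N h ∧ ∀ x ∈ X, h x = x

end Phylo

namespace Phylo

open Function

/-! ### `finsum` helpers over `ℕ` -/

lemma nat_single_le_finsum {ι : Type*} (f : ι → ℕ) (hf : (support f).Finite) (i : ι) :
    f i ≤ ∑ᶠ j, f j :=
  single_le_finsum i hf fun _ => Nat.zero_le _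

lemma nat_finsum_eq_zero {ι : Type*} {f : ι → ℕ} (hf : (support f).Finite)
    (h : ∑ᶠ j, f j = 0) (i : ι) : f i = 0 :=
  Nat.le_zero.mp (h ▸ nat_single_le_finsum f hf i)

lemma nat_exists_pos_of_finsum_pos {ι : Type*} {f : ι → ℕ}
    (h : 0 < ∑ᶠ j, f j) : ∃ i, 0 < f i := by
  by_contra hc
  push_neg at hc
  have hz : ∀ i, f i = 0 := fun i => Nat.le_zero.mp (hc i)
  have h0 : ∑ᶠ j, f j = ∑ᶠ _j : ι, (0 : ℕ) := finsum_congr hz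
  rw [finsum_zero] at h0
  omega

lemma nat_pair_le_finsum {ι : Type*} {f : ι → ℕ} (hf : (support f).Finite) {i j : ι}
    (hij : i ≠ j) : f i + f j ≤ ∑ᶠ k, f k := by
  by_cases hi : f i = 0
  · rw [hi, Nat.zero_add]; exact nat_single_le_finsum f hf j
  by_cases hj : f j = 0
  · rw [hj, Nat.add_zero]; exact nat_single_le_finsum f hf i
  have hi' : i ∈ hf.toFinset := by simp [Set.Finite.mem_toFinset, Function.mem_support, hi]
  have hj' : j ∈ hf.toFinset := by simp [Set.Finite.mem_toFinset, Function.mem_support, hj]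
  rw [finsum_eq_sum f hf]
  calc f i + f j = ∑ k ∈ {i, j}, f k := (Finset.sum_pair hij).symm
    _ ≤ _ := Finset.sum_le_sum_of_subset (by
        intro k hk
        simp only [Finset.mem_insert, Finset.mem_singleton] at hk
        rcases hk with rfl | rfl <;> assumption)

lemma nat_finsum_le_finsum {ι : Type*} {f g : ι → ℕ} (hg : (support g).Finite)
    (hle : ∀ i, f i ≤ g i) : ∑ᶠ i, f i ≤ ∑ᶠ i, g i := by
  have hsub : support f ⊆ ↑hg.toFinset := by
    intro i hi
    simp only [Function.mem_support] at hi
    simp only [Set.Finite.coe_toFinset, Function.mem_support]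
    intro h0
    exact hi (Nat.le_zero.mp (h0 ▸ hle i))
  rw [finsum_eq_finset_sum_of_support_subset f hsub, finsum_eq_sum g hg]
  exact Finset.sum_le_sum fun i _ => hle i

lemma nat_finsum_lt_finsum {ι : Type*} {f g : ι → ℕ} (hg : (support g).Finite)
    (hle : ∀ i, f i ≤ g i) {v : ι} (hv : f v < g v) : ∑ᶠ i, f i < ∑ᶠ i, g i := by
  have hsub : support f ⊆ ↑hg.toFinset := by
    intro i hi
    simp only [Function.mem_support] at hi
    simp only [Set.Finite.coe_toFinset, Function.mem_support]
    intro h0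
    exact hi (Nat.le_zero.mp (h0 ▸ hle i))
  have hvmem : v ∈ hg.toFinset := by
    simp only [Set.Finite.mem_toFinset, Function.mem_support]
    omega
  rw [finsum_eq_finset_sum_of_support_subset f hsub, finsum_eq_sum g hg]
  exact Finset.sum_lt_sum (fun i _ => hle i) ⟨v, hvmem, hv⟩

lemma nat_two_indices {ι : Type*} {f : ι → ℕ}
    (hle : ∀ i, f i ≤ 1) (h2 : 2 ≤ ∑ᶠ i, f i) : ∃ i j, i ≠ j ∧ 0 < f i ∧ 0 < f j := by
  obtain ⟨i, hi⟩ := nat_exists_pos_of_finsum_pos (f := f) (by omega)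
  by_contra hc
  push_neg at hc
  have hz : ∀ x, x ≠ i → f x = 0 := by
    intro x hx
    have := hc x i (hx)
    rcases Nat.eq_zero_or_pos (f x) with h | h
    · exact h
    · exact absurd hi (by simpa using this h)
  have := finsum_eq_single f i hz
  have := hle i
  omega

lemma ncard_Iio_nat (n : ℕ) : (Set.Iio n).ncard = n := by
  rw [show Set.Iio n = ↑(Finset.range n) by ext; simp, Set.ncard_coe_finset, Finset.card_range]

/-- Finiteness of bounded-length lists over a finite set. -/
lemma finite_lists {α : Type*} {S : Set α} (hS : S.Finite) :
    ∀ n : ℕ, {l : List α | (∀ a ∈ l, a ∈ S) ∧ l.length ≤ n}.Finite := by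
  intro n
  induction n with
  | zero =>
    apply Set.Finite.subset (Set.finite_singleton ([] : List α))
    rintro l ⟨-, hlen⟩
    have : l = [] := by cases l with
      | nil => rfl
      | cons a t => simp at hlen
    simp [this]
  | succ n ih =>
    apply Set.Finite.subset
      (Set.Finite.insert ([] : List α) (hS.biUnion fun a _ => ih.image (List.cons a)))
    rintro l ⟨hm, hlen⟩
    cases l with
    | nil => exact Set.mem_insert _ _
    | cons a t =>
      apply Set.mem_insert_of_mem
      simp only [Set.mem_iUnion, Set.mem_image]
      refine ⟨a, hm a (by simp), t, ⟨fun b hb => hm b (by simp [hb]), ?_⟩, rfl⟩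
      simp only [List.length_cons] at hlen
      omega

end Phylo

namespace Phylo
namespace Net

variable {V : Type u} {N : Net V} {u v w x : V} {a : Arc V} {l t : List (Arc V)}

/-! ### Basic walk lemmas -/

lemma walkFrom_nil (hu : u ∈ N.verts) : N.WalkFrom u [] :=
  ⟨hu, by simp, List.isChain_nil, by simp⟩

lemma WalkFrom.head_fst (h : N.WalkFrom u (a :: t)) : a.1 = u :=
  h.2.2.2 a (by simp)

lemma WalkFrom.tail (h : N.WalkFrom u (a :: t)) : N.WalkFrom a.2.1 t := by
  obtain ⟨hu, hok, hch, hhd⟩ := h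
  refine ⟨(hok a (by simp)).2.1, fun b hb => hok b (by simp [hb]), hch.tail, ?_⟩
  intro b hb
  cases t with
  | nil => simp at hb
  | cons c t' =>
    have hbc : c = b := by simpa using hb
    subst hbc
    exact ((List.isChain_cons_cons.mp hch).1).symm

lemma endOf_nil : endOf u ([] : List (Arc V)) = u := rfl

lemma endOf_cons : endOf u (a :: t) = endOf a.2.1 t := by
  cases t with
  | nil => rfl
  | cons b t' =>
    show ((a :: b :: t').getLastD (u, u, 0)).2.1 = ((b :: t').getLastD (a.2.1, a.2.1, 0)).2.1
    rw [List.getLastD_cons, List.getLastD_cons, List.getLastD_cons]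

lemma endOf_concat : endOf u (l ++ [a]) = a.2.1 := by
  simp [Net.endOf, List.getLastD_concat]

lemma endOf_eq_of_getLast? (h : l.getLast? = some a) : endOf u l = a.2.1 := by
  unfold Net.endOf
  rw [List.getLastD_eq_getLast?, h]
  rfl

lemma endOf_append : endOf u (l ++ t) = endOf (endOf u l) t := by
  induction l generalizing u with
  | nil => rfl
  | cons a l' ih => rw [List.cons_append, endOf_cons, ih, ← endOf_cons]

lemma WalkFrom.append (h1 : N.WalkFrom u l) (h2 : N.WalkFrom (endOf u l) t) :
    N.WalkFrom u (l ++ t) := by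
  obtain ⟨hu, hok1, hch1, hhd1⟩ := h1
  obtain ⟨hv, hok2, hch2, hhd2⟩ := h2
  refine ⟨hu, ?_, ?_, ?_⟩
  · intro a ha
    rcases List.mem_append.mp ha with h | h
    exacts [hok1 a h, hok2 a h]
  · refine List.IsChain.append hch1 hch2 ?_
    intro p hp q hq
    have h1 : endOf u l = p.2.1 := endOf_eq_of_getLast? hp
    exact h1.symm.trans (hhd2 q hq).symm
  · intro b hb
    cases l with
    | nil => exact hhd2 b (by simpa using hb)
    | cons c t' =>
      have hcb : c = b := by simpa using hb
      subst hcb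
      exact hhd1 c (by simp)

lemma WalkFrom.concat (h : N.WalkFrom u l) (ha : N.okArc a) (hfst : a.1 = endOf u l) :
    N.WalkFrom u (l ++ [a]) := by
  refine h.append ⟨?_, ?_, List.isChain_singleton a, ?_⟩
  · rw [← hfst]; exact ha.1
  · intro b hb
    have hba : b = a := by simpa using hb
    subst hba
    exact ha
  · intro b hb
    have hba : a = b := by simpa using hb
    exact hba ▸ hfst

/-! ### walkVerts lemmas -/

lemma walkVerts_cons : walkVerts u (a :: t) = u :: walkVerts a.2.1 t := by
  simp [Net.walkVerts]

lemma mem_walkVerts : x ∈ walkVerts u l ↔ x = u ∨ ∃ a ∈ l, (a : Arc V).2.1 = x := by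
  simp [Net.walkVerts, List.mem_map, eq_comm]

lemma endOf_mem_walkVerts : endOf u l ∈ walkVerts u l := by
  induction l generalizing u with
  | nil => simp [Net.endOf, Net.walkVerts]
  | cons a t ih =>
    rw [endOf_cons, walkVerts_cons]
    exact List.mem_cons_of_mem _ ih

lemma walkVerts_subset (h : N.WalkFrom u l) : ∀ x ∈ walkVerts u l, x ∈ N.verts := by
  intro x hx
  rcases mem_walkVerts.mp hx with rfl | ⟨a, ha, rfl⟩
  · exact h.1
  · exact (h.2.1 a ha).2.1

lemma fst_mem_walkVerts (h : N.WalkFrom u l) (ha : a ∈ l) : a.1 ∈ walkVerts u l := by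
  induction l generalizing u with
  | nil => simp at ha
  | cons b t ih =>
    rw [walkVerts_cons]
    rcases List.mem_cons.mp ha with rfl | ha'
    · rw [h.head_fst]; exact List.mem_cons_self
    · exact List.mem_cons_of_mem _ (ih h.tail ha')

lemma WalkFrom.arcRel_head (h : N.WalkFrom u (a :: t)) : N.ArcRel u a.2.1 := by
  have hok := h.2.1 a (by simp)
  have hpos : 0 < N.arcs a.1 a.2.1 := Nat.lt_of_le_of_lt (Nat.zero_le _) hok.2.2
  rwa [h.head_fst] at hpos

lemma reflTransGen_of_mem_walkVerts (h : N.WalkFrom u l) (hx : x ∈ walkVerts u l) :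
    Relation.ReflTransGen N.ArcRel u x := by
  induction l generalizing u with
  | nil =>
    rcases mem_walkVerts.mp hx with rfl | ⟨a, ha, rfl⟩
    · exact Relation.ReflTransGen.refl
    · simp at ha
  | cons a t ih =>
    rw [walkVerts_cons] at hx
    rcases List.mem_cons.mp hx with rfl | hx'
    · exact Relation.ReflTransGen.refl
    · exact Relation.ReflTransGen.head h.arcRel_head (ih h.tail hx')

lemma transGen_endOf (h : N.WalkFrom u l) (hne : l ≠ []) :
    Relation.TransGen N.ArcRel u (endOf u l) := by
  cases l with
  | nil => exact absurd rfl hne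
  | cons a t =>
    rw [endOf_cons]
    exact Relation.TransGen.head' h.arcRel_head
      (reflTransGen_of_mem_walkVerts h.tail endOf_mem_walkVerts)

lemma walkVerts_nodup (hac : N.Acyclic) (h : N.WalkFrom u l) : (walkVerts u l).Nodup := by
  induction l generalizing u with
  | nil => simp [Net.walkVerts]
  | cons a t ih =>
    rw [walkVerts_cons]
    refine List.nodup_cons.mpr ⟨?_, ih h.tail⟩
    intro hmem
    exact hac u (Relation.TransGen.head' h.arcRel_head
      (reflTransGen_of_mem_walkVerts h.tail hmem))

lemma walk_length_le (hfin : N.verts.Finite) (hac : N.Acyclic) (h : N.WalkFrom u l) :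
    l.length ≤ hfin.toFinset.card := by
  have hnd := walkVerts_nodup hac h
  have hsub : (walkVerts u l).toFinset ⊆ hfin.toFinset := by
    intro y hy
    rw [List.mem_toFinset] at hy
    rw [Set.Finite.mem_toFinset]
    exact walkVerts_subset h y hy
  have hcard := Finset.card_le_card hsub
  rw [List.toFinset_card_of_nodup hnd] at hcard
  have hlen : (walkVerts u l).length = l.length + 1 := by simp [Net.walkVerts]
  omega

lemma finite_okArc (hfin : N.verts.Finite) : {a : Arc V | N.okArc a}.Finite := by
  have hsub : {a : Arc V | N.okArc a} ⊆
      ⋃ u ∈ N.verts, ⋃ v ∈ N.verts, (fun i => (u, v, i)) '' Set.Iio (N.arcs u v) := by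
    rintro ⟨p, q, i⟩ ⟨h1, h2, h3⟩
    simp only [Set.mem_iUnion, Set.mem_image]
    exact ⟨p, h1, q, h2, i, h3, rfl⟩
  exact Set.Finite.subset
    (hfin.biUnion fun p _ => hfin.biUnion fun q _ => (Set.finite_Iio _).image _) hsub

lemma finite_walkFrom (hfin : N.verts.Finite) (hac : N.Acyclic) (u : V) :
    {l : List (Arc V) | N.WalkFrom u l}.Finite := by
  apply Set.Finite.subset (finite_lists (finite_okArc hfin) hfin.toFinset.card)
  intro l hl
  exact ⟨fun a ha => hl.2.1 a ha, walk_length_le hfin hac hl⟩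

/-! ### Reaches lemmas -/

lemma reaches_self (hu : u ∈ N.verts) : N.Reaches u u := ⟨[], walkFrom_nil hu, rfl⟩

lemma reaches_of_arc (hpos : 0 < N.arcs u v) (hu : u ∈ N.verts) (hv : v ∈ N.verts) :
    N.Reaches u v := by
  refine ⟨[(u, v, 0)], ⟨hu, ?_, List.isChain_singleton _, ?_⟩, rfl⟩
  · intro b hb
    have : b = (u, v, 0) := by simpa using hb
    subst this
    exact ⟨hu, hv, hpos⟩
  · intro b hb
    have hba : (u, v, 0) = b := by simpa using hb
    exact hba ▸ rfl

lemma Reaches.trans (h1 : N.Reaches u v) (h2 : N.Reaches v w) : N.Reaches u w := by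
  obtain ⟨l1, hw1, he1⟩ := h1
  obtain ⟨l2, hw2, he2⟩ := h2
  exact ⟨l1 ++ l2, hw1.append (he1 ▸ hw2), by rw [endOf_append, he1, he2]⟩

end Net
end Phylo

namespace Phylo
namespace Net

variable {V : Type u} {N : Net V} {u v w x : V} {a : Arc V} {l t : List (Arc V)}

/-! ### degree helpers -/

lemma inDeg_supp_fin (hfin : N.verts.Finite)
    (hmem : ∀ u v, N.arcs u v ≠ 0 → u ∈ N.verts ∧ v ∈ N.verts) (v : V) :
    (Function.support fun u => N.arcs u v).Finite :=
  hfin.subset fun u hu => (hmem u v hu).1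

lemma outDeg_supp_fin (hfin : N.verts.Finite)
    (hmem : ∀ u v, N.arcs u v ≠ 0 → u ∈ N.verts ∧ v ∈ N.verts) (u : V) :
    (Function.support fun w => N.arcs u w).Finite :=
  hfin.subset fun w hw => (hmem u w hw).2

lemma arcs_le_inDeg (hfin : N.verts.Finite)
    (hmem : ∀ u v, N.arcs u v ≠ 0 → u ∈ N.verts ∧ v ∈ N.verts) (u v : V) :
    N.arcs u v ≤ N.inDeg v := by
  unfold Net.inDeg
  exact nat_single_le_finsum _ (inDeg_supp_fin hfin hmem v) u

lemma arcs_le_outDeg (hfin : N.verts.Finite)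
    (hmem : ∀ u v, N.arcs u v ≠ 0 → u ∈ N.verts ∧ v ∈ N.verts) (u v : V) :
    N.arcs u v ≤ N.outDeg u := by
  unfold Net.outDeg
  exact nat_single_le_finsum _ (outDeg_supp_fin hfin hmem u) v

lemma pair_le_inDeg (hfin : N.verts.Finite)
    (hmem : ∀ u v, N.arcs u v ≠ 0 → u ∈ N.verts ∧ v ∈ N.verts) {u w : V} (v : V)
    (huw : u ≠ w) : N.arcs u v + N.arcs w v ≤ N.inDeg v := by
  unfold Net.inDeg
  exact nat_pair_le_finsum (inDeg_supp_fin hfin hmem v) huw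

lemma pair_le_outDeg (hfin : N.verts.Finite)
    (hmem : ∀ u v, N.arcs u v ≠ 0 → u ∈ N.verts ∧ v ∈ N.verts) (u : V) {v w : V}
    (hvw : v ≠ w) : N.arcs u v + N.arcs u w ≤ N.outDeg u := by
  unfold Net.outDeg
  exact nat_pair_le_finsum (outDeg_supp_fin hfin hmem u) hvw

lemma inDeg_pos_elim (h : 0 < N.inDeg v) : ∃ u, 0 < N.arcs u v := by
  unfold Net.inDeg at h
  exact nat_exists_pos_of_finsum_pos h

lemma two_parents
    (hpar : ∀ u, N.arcs u v ≤ 1) (h2 : 2 ≤ N.inDeg v) :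
    ∃ u1 u2, u1 ≠ u2 ∧ 0 < N.arcs u1 v ∧ 0 < N.arcs u2 v := by
  unfold Net.inDeg at h2
  exact nat_two_indices hpar h2

lemma two_children
    (hpar : ∀ w, N.arcs v w ≤ 1) (h2 : 2 ≤ N.outDeg v) :
    ∃ w1 w2, w1 ≠ w2 ∧ 0 < N.arcs v w1 ∧ 0 < N.arcs v w2 := by
  unfold Net.outDeg at h2
  exact nat_two_indices hpar h2

/-! ### innerVerts lemmas -/

lemma innerVerts_nil : innerVerts u ([] : List (Arc V)) = [] := rfl

lemma innerVerts_single : innerVerts u [a] = [] := rfl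

lemma innerVerts_cons {t : List (Arc V)} (h : t ≠ []) :
    innerVerts u (a :: t) = a.2.1 :: innerVerts a.2.1 t := by
  cases t with
  | nil => exact absurd rfl h
  | cons b t' =>
    simp only [Net.innerVerts, Net.walkVerts, List.map_cons]
    rw [List.dropLast_cons_of_ne_nil (by simp), List.dropLast_cons_of_ne_nil (by simp)]
    simp

lemma innerVerts_concat : innerVerts u (l ++ [a]) = l.map (fun b => b.2.1) := by
  simp only [Net.innerVerts, Net.walkVerts, List.map_append, List.map_cons, List.map_nil]
  rw [show u :: (l.map (fun b => b.2.1) ++ [a.2.1])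
      = (u :: l.map (fun b => b.2.1)) ++ [a.2.1] by simp, List.dropLast_concat]
  simp

/-! ### suppr lemmas -/

lemma suppr_root : N.suppr.root = N.root := rfl

lemma suppr_verts : N.suppr.verts = {v ∈ N.verts | ¬ N.Suppressible v} := rfl

lemma suppr_arcs_eq (hcond : u ∈ N.verts ∧ ¬N.Suppressible u ∧ w ∈ N.verts ∧ ¬N.Suppressible w) :
    N.suppr.arcs u w = Set.ncard {l : List (Arc V) | N.WalkFrom u l ∧ l ≠ [] ∧
      endOf u l = w ∧ ∀ x ∈ innerVerts u l, N.Suppressible x} := by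
  show (if _ then _ else _) = _
  rw [if_pos hcond]

lemma suppr_arcs_zero (hcond : ¬(u ∈ N.verts ∧ ¬N.Suppressible u ∧ w ∈ N.verts ∧ ¬N.Suppressible w)) :
    N.suppr.arcs u w = 0 := by
  show (if _ then _ else _) = 0
  rw [if_neg hcond]

lemma suppr_walkset_finite (hfin : N.verts.Finite) (hac : N.Acyclic) (u w : V) :
    {l : List (Arc V) | N.WalkFrom u l ∧ l ≠ [] ∧
      endOf u l = w ∧ ∀ x ∈ innerVerts u l, N.Suppressible x}.Finite :=
  (finite_walkFrom hfin hac u).subset fun l hl => hl.1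

lemma suppr_arcs_pos_elim (h : 0 < N.suppr.arcs u w) :
    (u ∈ N.verts ∧ ¬N.Suppressible u ∧ w ∈ N.verts ∧ ¬N.Suppressible w) ∧
    ∃ l, N.WalkFrom u l ∧ l ≠ [] ∧ endOf u l = w ∧ ∀ x ∈ innerVerts u l, N.Suppressible x := by
  by_cases hcond : u ∈ N.verts ∧ ¬N.Suppressible u ∧ w ∈ N.verts ∧ ¬N.Suppressible w
  · refine ⟨hcond, ?_⟩
    rw [suppr_arcs_eq hcond] at h
    obtain ⟨l, hl⟩ := Set.nonempty_of_ncard_ne_zero (Nat.pos_iff_ne_zero.mp h)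
    exact ⟨l, hl⟩
  · rw [suppr_arcs_zero hcond] at h
    omega

/-! ### strict monotonicity of descendant/ancestor sets -/

lemma ncard_desc_lt (hfin : N.verts.Finite) (hac : N.Acyclic) (hpos : 0 < N.arcs v u)
    (hv : v ∈ N.verts) (hu : u ∈ N.verts) :
    {z ∈ N.verts | N.Reaches u z}.ncard < {z ∈ N.verts | N.Reaches v z}.ncard := by
  have hsub : {z ∈ N.verts | N.Reaches u z} ⊆ {z ∈ N.verts | N.Reaches v z} := by
    rintro z ⟨hz, hr⟩
    exact ⟨hz, (reaches_of_arc hpos hv hu).trans hr⟩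
  have hvnot : v ∉ {z ∈ N.verts | N.Reaches u z} := by
    rintro ⟨-, l, hwk, he⟩
    rcases eq_or_ne l [] with rfl | hne
    · have huv : u = v := he
      subst huv
      exact hac u (Relation.TransGen.single hpos)
    · exact hac v (Relation.TransGen.head hpos (he ▸ transGen_endOf hwk hne))
  exact Set.ncard_lt_ncard
    ((Set.ssubset_iff_of_subset hsub).mpr ⟨v, ⟨hv, reaches_self hv⟩, hvnot⟩)
    (hfin.subset fun z hz => hz.1)

lemma ncard_anc_lt (hfin : N.verts.Finite) (hac : N.Acyclic) (hpos : 0 < N.arcs w u)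
    (hw : w ∈ N.verts) (hu : u ∈ N.verts) :
    {z ∈ N.verts | N.Reaches z w}.ncard < {z ∈ N.verts | N.Reaches z u}.ncard := by
  have hsub : {z ∈ N.verts | N.Reaches z w} ⊆ {z ∈ N.verts | N.Reaches z u} := by
    rintro z ⟨hz, hr⟩
    exact ⟨hz, hr.trans (reaches_of_arc hpos hw hu)⟩
  have hunot : u ∉ {z ∈ N.verts | N.Reaches z w} := by
    rintro ⟨-, l, hwk, he⟩
    rcases eq_or_ne l [] with rfl | hne
    · have huw : u = w := he
      exact hac u (Relation.TransGen.single (huw ▸ hpos))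
    · exact hac u (Relation.TransGen.tail (he ▸ transGen_endOf hwk hne) hpos)
  exact Set.ncard_lt_ncard
    ((Set.ssubset_iff_of_subset hsub).mpr ⟨u, ⟨hu, reaches_self hu⟩, hunot⟩)
    (hfin.subset fun z hz => hz.1)

end Net
end Phylo

namespace Phylo
namespace Net

variable {V : Type u} {N : Net V} {u v w x : V} {a : Arc V} {l t : List (Arc V)}

/-- In a tree-child phylogenetic network, every vertex lies on all root-paths
to some leaf. -/
lemma visible {X : Set V} (hPN : N.IsPhyloNetwork X) (hTC : N.TreeChild) :
    ∀ v ∈ N.verts, ∃ x ∈ X, ∀ l, N.WalkFrom N.root l → endOf N.root l = x →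
      v ∈ walkVerts N.root l := by
  have hPD := hPN.toIsXNetwork.toIsPseudoDAG
  have hfin := hPD.finite
  have hmem := hPD.arcMem
  have hac := hPD.acyclic
  suffices H : ∀ n : ℕ, ∀ v ∈ N.verts, ({z ∈ N.verts | N.Reaches v z}).ncard = n →
      ∃ x ∈ X, ∀ l, N.WalkFrom N.root l → endOf N.root l = x → v ∈ walkVerts N.root l by
    exact fun v hv => H _ v hv rfl
  intro n
  induction n using Nat.strong_induction_on with
  | _ n ih =>
  intro v hv hn
  by_cases hleaf : N.outDeg v = 0
  · refine ⟨v, (hPN.toIsXNetwork.leafSet v).mp ⟨hv, hleaf⟩, ?_⟩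
    intro l hl he
    exact he ▸ endOf_mem_walkVerts
  · obtain ⟨c, hpos, hcv, hcdeg⟩ := hTC v ⟨hv, hleaf⟩
    have hlt : ({z ∈ N.verts | N.Reaches c z}).ncard < n :=
      hn ▸ ncard_desc_lt hfin hac hpos hv hcv
    obtain ⟨y, hy, hall⟩ := ih _ hlt c hcv rfl
    refine ⟨y, hy, fun l hl he => ?_⟩
    have hcmem := hall l hl he
    have hcne : c ≠ N.root := by
      intro h
      rw [h] at hpos
      have h1 := arcs_le_inDeg hfin hmem v N.root
      rw [hPN.toIsXNetwork.rootInDeg] at h1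
      omega
    rcases mem_walkVerts.mp hcmem with h | ⟨b, hb, hb2⟩
    · exact absurd h hcne
    · have hok := hl.2.1 b hb
      have hbpos : 0 < N.arcs b.1 c := by
        have := hok.2.2
        rw [hb2] at this
        omega
      have hbv : b.1 = v := by
        by_contra hne2
        have := pair_le_inDeg hfin hmem c hne2
        have h1 := hcdeg
        omega
      exact hbv ▸ fst_mem_walkVerts hl hb

/-- Every vertex can be reached from a non-suppressible vertex along a walk
all of whose non-initial vertices are suppressible. -/
lemma exists_nonsupp_walk (hfin : N.verts.Finite)
    (hmem : ∀ u v, N.arcs u v ≠ 0 → u ∈ N.verts ∧ v ∈ N.verts) (hac : N.Acyclic) :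
    ∀ u ∈ N.verts, ∃ s l, ¬N.Suppressible s ∧ N.WalkFrom s l ∧ endOf s l = u ∧
      ∀ a ∈ l, N.Suppressible (a : Arc V).2.1 := by
  suffices H : ∀ n : ℕ, ∀ u ∈ N.verts, ({z ∈ N.verts | N.Reaches z u}).ncard = n →
      ∃ s l, ¬N.Suppressible s ∧ N.WalkFrom s l ∧ endOf s l = u ∧
        ∀ a ∈ l, N.Suppressible (a : Arc V).2.1 by
    exact fun u hu => H _ u hu rfl
  intro n
  induction n using Nat.strong_induction_on with
  | _ n ih =>
  intro u hu hn
  by_cases hs : N.Suppressible u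
  · have h1 : N.inDeg u = 1 := hs.2.1
    obtain ⟨p, hp⟩ := inDeg_pos_elim (show 0 < N.inDeg u by omega)
    have hpmem := hmem p u (by omega)
    have hlt : ({z ∈ N.verts | N.Reaches z p}).ncard < n :=
      hn ▸ ncard_anc_lt hfin hac hp hpmem.1 hu
    obtain ⟨s, l, hns, hwk, hend, hall⟩ := ih _ hlt p hpmem.1 rfl
    refine ⟨s, l ++ [(p, u, 0)], hns, ?_, endOf_concat, ?_⟩
    · exact hwk.concat ⟨hpmem.1, hu, hp⟩ hend.symm
    · intro a ha
      rcases List.mem_append.mp ha with h | h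
      · exact hall a h
      · have : a = (p, u, 0) := by simpa using h
        subst this
        exact hs
  · exact ⟨u, [], hs, walkFrom_nil hu, rfl, by simp⟩

/-- Determinism of walks through suppressible vertices. -/
lemma walk_det (hfin : N.verts.Finite)
    (hmem : ∀ u v, N.arcs u v ≠ 0 → u ∈ N.verts ∧ v ∈ N.verts) :
    ∀ (l1 : List (Arc V)) (l2 : List (Arc V)) (s : V),
    N.WalkFrom s l1 → N.WalkFrom s l2 →
    (∀ x ∈ innerVerts s l1, N.Suppressible x) → (∀ x ∈ innerVerts s l2, N.Suppressible x) →
    ¬N.Suppressible (endOf s l1) → ¬N.Suppressible (endOf s l2) →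
    l1.head? = l2.head? → l1 ≠ [] → l2 ≠ [] → l1 = l2 := by
  intro l1
  induction l1 with
  | nil =>
    intro l2 s _ _ _ _ _ _ _ h _
    exact absurd rfl h
  | cons a t1 ih =>
    intro l2 s hw1 hw2 hin1 hin2 he1 he2 hhd hne1 hne2
    cases l2 with
    | nil => exact absurd rfl hne2
    | cons b t2 =>
      have hab : a = b := by simpa using hhd
      subst hab
      cases t1 with
      | nil =>
        cases t2 with
        | nil => rfl
        | cons d t2' =>
          exfalso
          apply he1
          have : a.2.1 ∈ innerVerts s (a :: d :: t2') := by
            rw [innerVerts_cons (by simp)]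
            simp
          exact hin2 a.2.1 this
      | cons c t1' =>
        cases t2 with
        | nil =>
          exfalso
          apply he2
          have : a.2.1 ∈ innerVerts s (a :: c :: t1') := by
            rw [innerVerts_cons (by simp)]
            simp
          exact hin1 a.2.1 this
        | cons d t2' =>
          have hsupp : N.Suppressible a.2.1 := by
            apply hin1
            rw [innerVerts_cons (by simp)]
            simp
          have hout : N.outDeg a.2.1 = 1 := hsupp.2.2
          have hwt1 := hw1.tail
          have hwt2 := hw2.tail
          have hc1 : c.1 = a.2.1 := hwt1.head_fst
          have hd1 : d.1 = a.2.1 := hwt2.head_fst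
          have hokc := hwt1.2.1 c (by simp)
          have hokd := hwt2.2.1 d (by simp)
          have hposc : 0 < N.arcs a.2.1 c.2.1 := by
            have := hokc.2.2
            rw [hc1] at this
            omega
          have hposd : 0 < N.arcs a.2.1 d.2.1 := by
            have := hokd.2.2
            rw [hd1] at this
            omega
          have hcd21 : c.2.1 = d.2.1 := by
            by_contra hne
            have := pair_le_outDeg hfin hmem a.2.1 hne
            omega
          have hlec : N.arcs a.2.1 c.2.1 ≤ 1 := hout ▸ arcs_le_outDeg hfin hmem _ _
          have hled : N.arcs a.2.1 d.2.1 ≤ 1 := hout ▸ arcs_le_outDeg hfin hmem _ _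
          have hic : c.2.2 = 0 := by
            have := hokc.2.2
            rw [hc1] at this
            omega
          have hid : d.2.2 = 0 := by
            have := hokd.2.2
            rw [hd1] at this
            omega
          have hcd : c = d := by
            have h1 : c.1 = d.1 := hc1.trans hd1.symm
            have h2 : c.2 = d.2 := Prod.ext hcd21 (hic.trans hid.symm)
            exact Prod.ext h1 h2
          subst hcd
          have hrec : (c :: t1') = (c :: t2') := by
            apply ih (c :: t2') a.2.1 hwt1 hwt2
            · intro y hy
              apply hin1
              rw [innerVerts_cons (by simp)]
              exact List.mem_cons_of_mem _ hy
            · intro y hy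
              apply hin2
              rw [innerVerts_cons (by simp)]
              exact List.mem_cons_of_mem _ hy
            · rw [endOf_cons] at he1; exact he1
            · rw [endOf_cons] at he2; exact he2
            · rfl
            · simp
            · simp
          rw [hrec]

/-- A phylogenetic network has no suppressible vertices. -/
lemma no_supp_of_phylo {X : Set V} (hPN : N.IsPhyloNetwork X) : ∀ v, ¬N.Suppressible v := by
  rintro v ⟨hv, hin, hout⟩
  have := hPN.toIsXNetwork.treeOutDeg v hv (by omega) (by omega)
  omega

/-- Suppressing a phylogenetic network changes nothing. -/
lemma suppr_iso_self {X : Set V} (hPN : N.IsPhyloNetwork X) : NetIsoVia N.suppr N id := by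
  have hPD := hPN.toIsXNetwork.toIsPseudoDAG
  have hns := no_supp_of_phylo hPN
  have hverts : N.suppr.verts = N.verts := by
    ext z
    simp [suppr_verts, hns]
  refine ⟨by rw [hverts]; exact Set.bijOn_id _, ?_, rfl⟩
  intro p hp q hq
  have hp' : p ∈ N.verts := by rw [← hverts]; exact hp
  have hq' : q ∈ N.verts := by rw [← hverts]; exact hq
  rw [suppr_arcs_eq ⟨hp', hns p, hq', hns q⟩]
  have hset : {l : List (Arc V) | N.WalkFrom p l ∧ l ≠ [] ∧ endOf p l = q ∧
      ∀ x ∈ innerVerts p l, N.Suppressible x}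
      = (fun i => [(p, q, i)]) '' Set.Iio (N.arcs p q) := by
    ext l
    constructor
    · rintro ⟨hwk, hne, he, hinn⟩
      cases l with
      | nil => exact absurd rfl hne
      | cons a t =>
        cases t with
        | nil =>
          have ha1 : a.1 = p := hwk.head_fst
          have ha2 : a.2.1 = q := he
          have hok := hwk.2.1 a (by simp)
          refine ⟨a.2.2, ?_, ?_⟩
          · rw [← ha1, ← ha2]; exact hok.2.2
          · show [(p, q, a.2.2)] = [a]
            rw [← ha1, ← ha2]
        | cons b t' =>
          exfalso
          have : a.2.1 ∈ innerVerts p (a :: b :: t') := by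
            rw [innerVerts_cons (by simp)]
            simp
          exact hns _ (hinn _ this)
    · rintro ⟨i, hi, rfl⟩
      refine ⟨⟨hp', ?_, List.isChain_singleton _, ?_⟩, by simp, rfl, ?_⟩
      · intro b hb
        have : b = (p, q, i) := by simpa using hb
        subst this
        exact ⟨hp', hq', hi⟩
      · intro b hb
        have : (p, q, i) = b := by simpa using hb
        exact this ▸ rfl
      · intro y hy
        rw [innerVerts_single] at hy
        simp at hy
  rw [hset, Set.ncard_image_of_injective _ (fun i j h => by simpa using h), ncard_Iio_nat]
  rfl

end Net
end Phylo

namespace Phylo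

open Net

/-- **Corollary 7.**  Let `N` be a stable phylogenetic network
on `X` that is tree-child.  Then every phylogenetic tree on `X` that is
strongly displayed by `N` is a base tree for `N`. -/
theorem strongly_displayed_is_base_tree {V : Type u} (X : Set V) (N : Net V)
    (hX : 3 ≤ X.ncard) (hN : IsStable N X) (hTC : N.TreeChild) :
    ∀ T : Net V, Net.IsPhyloTree T X → StronglyDisplays N X T →
      IsBaseTreeFor T X N := by
  intro T hT hSD
  obtain ⟨N', g, hw, hroot⟩ := hSD
  obtain ⟨hPN, -⟩ := hN
  obtain ⟨hVsub, hArcLe, hrootmem, hreach, hleaf, hiso, hgfix⟩ := hw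
  have hXN := hPN.toIsXNetwork
  have hPD := hXN.toIsPseudoDAG
  have hfinN : N.verts.Finite := hPD.finite
  have hmemN := hPD.arcMem
  have hacN := hPD.acyclic
  -- basic facts about N'
  have hfin' : N'.verts.Finite := hfinN.subset hVsub
  have hac' : N'.Acyclic := by
    intro z hz
    exact hacN z (Relation.TransGen.mono (p := N.ArcRel)
      (fun a b h => lt_of_lt_of_le h (hArcLe a b)) z z hz)
  have hwalk : ∀ u l, N'.WalkFrom u l → N.WalkFrom u l := by
    rintro u l ⟨hu, hok, hch, hhd⟩
    refine ⟨hVsub hu, fun a ha => ?_, hch, hhd⟩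
    obtain ⟨h1, h2, h3⟩ := hok a ha
    exact ⟨hVsub h1, hVsub h2, lt_of_lt_of_le h3 (hArcLe _ _)⟩
  have hXv : ∀ x ∈ X, x ∈ N'.verts := fun x hx => ((hleaf x).mpr hx).1
  -- N' is spanning
  have hspan : N'.verts = N.verts := by
    apply Set.Subset.antisymm hVsub
    intro v hv
    obtain ⟨x, hx, hvis⟩ := Net.visible hPN hTC v hv
    obtain ⟨l, hl, he⟩ := hreach x (hXv x hx)
    have hl' : N.WalkFrom N.root l := by
      have := hwalk _ _ hl
      rwa [hroot] at this
    have he' : endOf N.root l = x := by rw [← hroot]; exact he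
    have hmem2 := hvis l hl' he'
    have : v ∈ walkVerts N'.root l := by rw [hroot]; exact hmem2
    exact walkVerts_subset hl v this
  have hmem' : ∀ u v, N'.arcs u v ≠ 0 → u ∈ N'.verts ∧ v ∈ N'.verts := by
    intro u v h
    have h2 : N.arcs u v ≠ 0 := by
      have := hArcLe u v
      omega
    rw [hspan]
    exact hmemN u v h2
  -- root in-degree of N' is zero
  have hrootIn' : N'.inDeg N'.root = 0 := by
    have hz : ∀ p, N'.arcs p N'.root = 0 := by
      intro p
      rw [hroot]
      have h1 := arcs_le_inDeg hfinN hmemN p N.root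
      rw [hXN.rootInDeg] at h1
      have h2 := hArcLe p N.root
      omega
    unfold Net.inDeg
    rw [finsum_congr hz, finsum_zero]
  -- non-root vertices of N' have in-degree ≥ 1
  have hin_ge : ∀ v ∈ N'.verts, v ≠ N'.root → 1 ≤ N'.inDeg v := by
    intro v hv hne
    obtain ⟨l, hl, he⟩ := hreach v hv
    cases l with
    | nil =>
      have : N'.root = v := he
      exact absurd this.symm hne
    | cons a t =>
      have hne' : (a :: t) ≠ [] := by simp
      have hb : endOf N'.root (a :: t) = ((a :: t).getLast hne').2.1 :=
        endOf_eq_of_getLast? (List.getLast?_eq_getLast hne')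
      have hbmem : (a :: t).getLast hne' ∈ (a :: t) := List.getLast_mem hne'
      have hok := hl.2.1 _ hbmem
      have hbv : ((a :: t).getLast hne').2.1 = v := hb.symm.trans he
      have hpos : 0 < N'.arcs ((a :: t).getLast hne').1 v := by
        have := hok.2.2
        rw [hbv] at this
        omega
      calc 1 ≤ N'.arcs ((a :: t).getLast hne').1 v := hpos
        _ ≤ N'.inDeg v := arcs_le_inDeg hfin' hmem' _ v
  -- unpack the isomorphism T ≅ N'.suppr
  obtain ⟨hbij, harcs, hgroot⟩ := hiso
  have hTPN := hT.toIsPhyloNetwork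
  have hTXN := hTPN.toIsXNetwork
  have hTPD := hTXN.toIsPseudoDAG
  have hTfin := hTPD.finite
  have hTmem := hTPD.arcMem
  -- N' has no hybrid vertices
  have hnohyb : ∀ v, N'.inDeg v ≤ 1 := by
    intro v
    by_contra hc
    push_neg at hc
    have hv2 : 2 ≤ N'.inDeg v := hc
    obtain ⟨u1, u2, hne12, hp1, hp2⟩ := two_parents
      (fun p => le_trans (hArcLe p v) (hPN.noParallel p v)) hv2
    have hvmem : v ∈ N'.verts := (hmem' u1 v (by omega)).2
    have hu1 : u1 ∈ N'.verts := (hmem' u1 v (by omega)).1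
    have hu2 : u2 ∈ N'.verts := (hmem' u2 v (by omega)).1
    have hnsv : ¬ N'.Suppressible v := by
      rintro ⟨-, hin, -⟩
      omega
    obtain ⟨s1, l1, hns1, hwk1, hend1, hall1⟩ := exists_nonsupp_walk hfin' hmem' hac' u1 hu1
    obtain ⟨s2, l2, hns2, hwk2, hend2, hall2⟩ := exists_nonsupp_walk hfin' hmem' hac' u2 hu2
    have hwk1' : N'.WalkFrom s1 (l1 ++ [(u1, v, 0)]) :=
      hwk1.concat ⟨hu1, hvmem, hp1⟩ hend1.symm
    have hwk2' : N'.WalkFrom s2 (l2 ++ [(u2, v, 0)]) :=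
      hwk2.concat ⟨hu2, hvmem, hp2⟩ hend2.symm
    have hinner1 : ∀ y ∈ innerVerts s1 (l1 ++ [(u1, v, 0)]), N'.Suppressible y := by
      rw [innerVerts_concat]
      intro y hy
      obtain ⟨b, hb, rfl⟩ := List.mem_map.mp hy
      exact hall1 b hb
    have hinner2 : ∀ y ∈ innerVerts s2 (l2 ++ [(u2, v, 0)]), N'.Suppressible y := by
      rw [innerVerts_concat]
      intro y hy
      obtain ⟨b, hb, rfl⟩ := List.mem_map.mp hy
      exact hall2 b hb
    have hset1 : (l1 ++ [(u1, v, 0)]) ∈ {l : List (Arc V) | N'.WalkFrom s1 l ∧ l ≠ [] ∧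
        endOf s1 l = v ∧ ∀ y ∈ innerVerts s1 l, N'.Suppressible y} :=
      ⟨hwk1', by simp, endOf_concat, hinner1⟩
    have hset2 : (l2 ++ [(u2, v, 0)]) ∈ {l : List (Arc V) | N'.WalkFrom s2 l ∧ l ≠ [] ∧
        endOf s2 l = v ∧ ∀ y ∈ innerVerts s2 l, N'.Suppressible y} :=
      ⟨hwk2', by simp, endOf_concat, hinner2⟩
    have hs1mem : s1 ∈ N'.verts := hwk1.1
    have hs2mem : s2 ∈ N'.verts := hwk2.1
    have hvsup : v ∈ N'.suppr.verts := ⟨hvmem, hnsv⟩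
    have hs1sup : s1 ∈ N'.suppr.verts := ⟨hs1mem, hns1⟩
    have hs2sup : s2 ∈ N'.suppr.verts := ⟨hs2mem, hns2⟩
    obtain ⟨bv, hbv, hgbv⟩ := hbij.2.2 hvsup
    obtain ⟨a1, ha1, hga1⟩ := hbij.2.2 hs1sup
    obtain ⟨a2, ha2, hga2⟩ := hbij.2.2 hs2sup
    by_cases hss : s1 = s2
    · subst hss
      have hw12 : (l1 ++ [(u1, v, 0)]) ≠ (l2 ++ [(u2, v, 0)]) := by
        intro h
        have := congrArg (fun l => (l.getLastD ((v, v, 0) : Arc V))) h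
        simp only [List.getLastD_concat] at this
        exact hne12 (congrArg Prod.fst this)
      have h2le : 2 ≤ N'.suppr.arcs s1 v := by
        rw [suppr_arcs_eq ⟨hs1mem, hns1, hvmem, hnsv⟩]
        have hfs := (suppr_walkset_finite hfin' hac' s1 v)
        have := (Set.one_lt_ncard_iff hfs).mpr
          ⟨_, _, hset1, hset2, hw12⟩
        omega
      have harc1 := harcs a1 ha1 bv hbv
      rw [hga1, hgbv] at harc1
      have hpar := hTPN.noParallel a1 bv
      omega
    · have h1le : 1 ≤ N'.suppr.arcs s1 v := by
        rw [suppr_arcs_eq ⟨hs1mem, hns1, hvmem, hnsv⟩]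
        have hfs := (suppr_walkset_finite hfin' hac' s1 v)
        have := (Set.ncard_pos hfs).mpr ⟨_, hset1⟩
        omega
      have h2le : 1 ≤ N'.suppr.arcs s2 v := by
        rw [suppr_arcs_eq ⟨hs2mem, hns2, hvmem, hnsv⟩]
        have hfs := (suppr_walkset_finite hfin' hac' s2 v)
        have := (Set.ncard_pos hfs).mpr ⟨_, hset2⟩
        omega
      have harc1 := harcs a1 ha1 bv hbv
      rw [hga1, hgbv] at harc1
      have harc2 := harcs a2 ha2 bv hbv
      rw [hga2, hgbv] at harc2
      have hane : a1 ≠ a2 := by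
        intro h
        rw [← hga1, ← hga2, h] at hss
        exact hss rfl
      have hpair := pair_le_inDeg hTfin hTmem bv hane
      exact hT.noHybrid bv ⟨hbv, by omega⟩
  have hindeg1 : ∀ v ∈ N'.verts, v ≠ N'.root → N'.inDeg v = 1 :=
    fun v hv hne => le_antisymm (hnohyb v) (hin_ge v hv hne)
  have hRT : IsRootedTree N' :=
    ⟨⟨hfin', hrootmem, hmem', hac', hreach⟩, hrootIn', hindeg1⟩
  have hsubdiv : IsSubdivisionOf N' T X := ⟨hRT, g, ⟨hbij, harcs, hgroot⟩, hgfix⟩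
  -- degree monotonicity
  have hout_mono : ∀ u, N'.outDeg u ≤ N.outDeg u := by
    intro u
    unfold Net.outDeg
    exact nat_finsum_le_finsum (outDeg_supp_fin hfinN hmemN u) (fun z => hArcLe u z)
  have hout_strict : ∀ u v0, N'.arcs u v0 < N.arcs u v0 → N'.outDeg u < N.outDeg u := by
    intro u v0 hlt
    unfold Net.outDeg
    exact nat_finsum_lt_finsum (outDeg_supp_fin hfinN hmemN u) (fun z => hArcLe u z) hlt
  -- the root of T has out-degree 2
  have hTroot2 : T.outDeg T.root = 2 := by
    have hrt : T.root ∈ T.verts := hTPD.rootMem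
    have hne0 : T.outDeg T.root ≠ 0 := by
      intro h0
      have hsub2 : X ⊆ {T.root} := by
        intro y hy
        have hyv : y ∈ T.verts := ((hTXN.leafSet y).mpr hy).1
        obtain ⟨l, hl, he⟩ := hTPD.connected y hyv
        cases l with
        | nil =>
          have : T.root = y := he
          simp [← this]
        | cons a t =>
          exfalso
          have hok := hl.2.1 a (by simp)
          have ha1 : a.1 = T.root := hl.head_fst
          have hpos : 0 < T.arcs T.root a.2.1 := by
            have := hok.2.2
            rw [ha1] at this
            omega
          have := arcs_le_outDeg hTfin hTmem T.root a.2.1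
          omega
      have := Set.ncard_le_ncard hsub2 (Set.finite_singleton _)
      simp [Set.ncard_singleton] at this
      omega
    exact hTXN.treeOutDeg T.root hrt (by rw [hTXN.rootInDeg]; omega) hne0
  -- the root of N has out-degree 2
  have hNroot2 : N.outDeg N.root = 2 := by
    have hrt : N.root ∈ N.verts := hPD.rootMem
    have hne0 : N.outDeg N.root ≠ 0 := by
      intro h0
      have hsub2 : X ⊆ {N.root} := by
        intro y hy
        have hyv : y ∈ N.verts := ((hXN.leafSet y).mpr hy).1
        obtain ⟨l, hl, he⟩ := hPD.connected y hyv
        cases l with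
        | nil =>
          have : N.root = y := he
          simp [← this]
        | cons a t =>
          exfalso
          have hok := hl.2.1 a (by simp)
          have ha1 : a.1 = N.root := hl.head_fst
          have hpos : 0 < N.arcs N.root a.2.1 := by
            have := hok.2.2
            rw [ha1] at this
            omega
          have := arcs_le_outDeg hfinN hmemN N.root a.2.1
          omega
      have := Set.ncard_le_ncard hsub2 (Set.finite_singleton _)
      simp [Set.ncard_singleton] at this
      omega
    exact hXN.treeOutDeg N.root hrt (by rw [hXN.rootInDeg]; omega) hne0
  -- the root of N' keeps out-degree 2
  have hrootout2 : N'.outDeg N'.root = 2 := by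
    have hle : N'.outDeg N'.root ≤ 2 := by
      rw [hroot]
      exact le_trans (hout_mono N.root) (le_of_eq hNroot2)
    have hne0 : N'.outDeg N'.root ≠ 0 := by
      intro h0
      have hx := (hleaf N'.root).mp ⟨hrootmem, h0⟩
      have hlf : N.IsLeaf N'.root := (hXN.leafSet _).mpr hx
      have := hlf.2
      rw [hroot] at this
      omega
    have hne1 : N'.outDeg N'.root ≠ 1 := by
      intro h1
      obtain ⟨b1, b2, hb12, hq1, hq2⟩ := two_children
        (fun z => hTPN.noParallel T.root z) (by omega : 2 ≤ T.outDeg T.root)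
      have hb1v : b1 ∈ T.verts := (hTmem T.root b1 (by omega)).2
      have hb2v : b2 ∈ T.verts := (hTmem T.root b2 (by omega)).2
      have hgr : g T.root = N'.root := hgroot
      have hA1 : N'.suppr.arcs N'.root (g b1) = T.arcs T.root b1 := by
        have h := harcs T.root hTPD.rootMem b1 hb1v
        rwa [hgr] at h
      have hA2 : N'.suppr.arcs N'.root (g b2) = T.arcs T.root b2 := by
        have h := harcs T.root hTPD.rootMem b2 hb2v
        rwa [hgr] at h
      obtain ⟨hcond1, w1, hwk1, hne1', hend1, hin1⟩ := suppr_arcs_pos_elim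
        (show 0 < N'.suppr.arcs N'.root (g b1) from hA1.symm ▸ hq1)
      obtain ⟨hcond2, w2, hwk2, hne2', hend2, hin2⟩ := suppr_arcs_pos_elim
        (show 0 < N'.suppr.arcs N'.root (g b2) from hA2.symm ▸ hq2)
      -- both walks start with the unique out-arc of the root
      have hhead : w1.head? = w2.head? := by
        cases w1 with
        | nil => exact absurd rfl hne1'
        | cons c t1 =>
          cases w2 with
          | nil => exact absurd rfl hne2'
          | cons d t2 =>
            have hc1 : c.1 = N'.root := hwk1.head_fst
            have hd1 : d.1 = N'.root := hwk2.head_fst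
            have hokc := hwk1.2.1 c (by simp)
            have hokd := hwk2.2.1 d (by simp)
            have hposc : 0 < N'.arcs N'.root c.2.1 := by
              have := hokc.2.2
              rw [hc1] at this
              omega
            have hposd : 0 < N'.arcs N'.root d.2.1 := by
              have := hokd.2.2
              rw [hd1] at this
              omega
            have hcd21 : c.2.1 = d.2.1 := by
              by_contra hne
              have := pair_le_outDeg hfin' hmem' N'.root hne
              omega
            have hlec : N'.arcs N'.root c.2.1 ≤ 1 := h1 ▸ arcs_le_outDeg hfin' hmem' _ _
            have hled : N'.arcs N'.root d.2.1 ≤ 1 := h1 ▸ arcs_le_outDeg hfin' hmem' _ _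
            have hic : c.2.2 = 0 := by
              have := hokc.2.2
              rw [hc1] at this
              omega
            have hid : d.2.2 = 0 := by
              have := hokd.2.2
              rw [hd1] at this
              omega
            have : c = d :=
              Prod.ext (hc1.trans hd1.symm) (Prod.ext hcd21 (hic.trans hid.symm))
            rw [this]
            rfl
      have hdet := walk_det hfin' hmem' w1 w2 N'.root hwk1 hwk2 hin1 hin2
        (hend1 ▸ hcond1.2.2.2) (hend2 ▸ hcond2.2.2.2) hhead hne1' hne2'
      have : g b1 = g b2 := by rw [← hend1, ← hend2, hdet]
      exact hb12 (hbij.2.1 hb1v hb2v this)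
    omega
  -- all missing arcs have suppressible endpoints
  have hsuppstep : ∀ u v, N'.arcs u v ≠ N.arcs u v → N'.Suppressible u ∧ N'.Suppressible v := by
    intro u v hnearc
    have hlt : N'.arcs u v < N.arcs u v := lt_of_le_of_ne (hArcLe u v) hnearc
    have hN1 : N.arcs u v = 1 := by
      have := hPN.noParallel u v
      omega
    have hN'0 : N'.arcs u v = 0 := by omega
    have huV : u ∈ N.verts := (hmemN u v (by omega)).1
    have hvV : v ∈ N.verts := (hmemN u v (by omega)).2
    have huV' : u ∈ N'.verts := by rw [hspan]; exact huV
    have hvV' : v ∈ N'.verts := by rw [hspan]; exact hvV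
    have hvroot : v ≠ N'.root := by
      intro h
      have h1 := arcs_le_inDeg hfinN hmemN u N.root
      rw [hXN.rootInDeg] at h1
      rw [h, hroot] at hN1
      omega
    have hvin : N'.inDeg v = 1 := hindeg1 v hvV' hvroot
    obtain ⟨p, hppos⟩ := inDeg_pos_elim (show 0 < N'.inDeg v by omega)
    have hpu : p ≠ u := by
      intro h
      rw [h, hN'0] at hppos
      omega
    have hpN : 0 < N.arcs p v := lt_of_lt_of_le hppos (hArcLe p v)
    have hhyb : 2 ≤ N.inDeg v := by
      have := pair_le_inDeg hfinN hmemN v hpu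
      omega
    have hvoutN : N.outDeg v = 1 := hXN.hybridOutDeg v hvV hhyb
    have hvout' : N'.outDeg v = 1 := by
      have hle := hout_mono v
      have hne0 : N'.outDeg v ≠ 0 := by
        intro h0
        have hx := (hleaf v).mp ⟨hvV', h0⟩
        have := ((hXN.leafSet v).mpr hx).2
        omega
      omega
    have huX : u ∉ X := by
      intro hx
      have h0 := ((hXN.leafSet u).mpr hx).2
      have := arcs_le_outDeg hfinN hmemN u v
      omega
    have huout0 : N'.outDeg u ≠ 0 := fun h0 => huX ((hleaf u).mp ⟨huV', h0⟩)
    have huoutlt : N'.outDeg u < N.outDeg u := hout_strict u v (by omega)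
    have huoutN : N.outDeg u ≤ 2 := by
      by_cases hdeg : N.inDeg u ≤ 1
      · rw [hXN.treeOutDeg u huV hdeg (by
          have := arcs_le_outDeg hfinN hmemN u v
          omega)]
      · rw [hXN.hybridOutDeg u huV (by omega)]
        omega
    have huout' : N'.outDeg u = 1 := by omega
    have huroot : u ≠ N'.root := by
      intro h
      rw [h, hrootout2] at huout'
      omega
    have huin : N'.inDeg u = 1 := hindeg1 u huV' huroot
    exact ⟨⟨huV', huin, huout'⟩, ⟨hvV', hvin, hvout'⟩⟩
  exact ⟨N', N, hsubdiv, hspan.symm, hroot.symm, hArcLe, hsuppstep, hPN.noParallel, hacN,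
    id, suppr_iso_self hPN, fun x _ => rfl⟩

end Phylo
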